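/- Let A = (E, {M_k}_{k∈O}) be a quantum algorithm on a d-dimensional space, ε ≥ 0, and 0 ≤ η ≤ 1. Then A is ε-differentially private within η if and only if for every subset S ⊆ O, η·λ_max(M_S) ≤ (e^ε + η − 1)·λ_min(M_S), where M_S = ∑_{k∈S} E†(M_k). (Equivalently, ε ≥ ln[(κ*−1)η+1] where κ* = max_{S⊆O} λ_max(M_S)/λ_min(M_S), with the convention that the ratio is +∞ if λ_min(M_S) = 0 < λ_max(M_S).) -/

import Mathlib

open Matrix BigOperators
open scoped ComplexOrder

namespace QDP

variable {n : Type*} [Fintype n] [DecidableEq n]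

/-- The square root `Matrix.PosSemidef.sqrt` of the older Mathlib (removed since), with its old definition. -/
noncomputable def psdSqrt {A : Matrix n n ℂ} (hA : A.PosSemidef) : Matrix n n ℂ :=
  hA.1.eigenvectorUnitary.1 * diagonal ((↑) ∘ (√·) ∘ hA.1.eigenvalues) *
  (star hA.1.eigenvectorUnitary : Matrix n n ℂ)

/-- Trace distance `D(ρ,σ) = (1/2) tr |ρ - σ|`, where `|A| = sqrt (Aᴴ A)`. -/
noncomputable def traceDist (ρ σ : Matrix n n ℂ) : ℝ :=
  (1 / 2 : ℝ) * ((psdSqrt (Matrix.posSemidef_conjTranspose_mul_self (ρ - σ))).trace).re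

/-- A density matrix: positive semidefinite with trace one. -/
def IsDensity (ρ : Matrix n n ℂ) : Prop := ρ.PosSemidef ∧ ρ.trace = 1

/-- The largest eigenvalue of a (Hermitian) matrix. -/
noncomputable def lamMax (M : Matrix n n ℂ) : ℝ :=
  if h : M.IsHermitian then ⨆ i, h.eigenvalues i else 0

/-- The smallest eigenvalue of a (Hermitian) matrix. -/
noncomputable def lamMin (M : Matrix n n ℂ) : ℝ :=
  if h : M.IsHermitian then ⨅ i, h.eigenvalues i else 0

/-- Application of a quantum channel given by Kraus matrices. -/
noncomputable def applyChan {ι : Type*} [Fintype ι] (E : ι → Matrix n n ℂ)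
    (ρ : Matrix n n ℂ) : Matrix n n ℂ := ∑ j, E j * ρ * (E j)ᴴ

/-- The dual of a quantum channel given by Kraus matrices. -/
noncomputable def dualChan {ι : Type*} [Fintype ι] (E : ι → Matrix n n ℂ)
    (M : Matrix n n ℂ) : Matrix n n ℂ := ∑ j, (E j)ᴴ * M * E j

/-- `(ε,δ)`-differential privacy within `η` of the quantum algorithm `(E, M)`. -/
def IsDP {ι : Type*} [Fintype ι] {O : Type*} [Fintype O]
    (E : ι → Matrix n n ℂ) (M : O → Matrix n n ℂ) (ε δ η : ℝ) : Prop :=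
  ∀ ρ σ : Matrix n n ℂ, IsDensity ρ → IsDensity σ → traceDist ρ σ ≤ η →
    ∀ S : Finset O,
      (∑ k ∈ S, (M k * applyChan E ρ).trace).re ≤
        Real.exp ε * (∑ k ∈ S, (M k * applyChan E σ).trace).re + δ

/-- Rank-one projection `|ψ⟩⟨ψ|`. -/
noncomputable def proj (ψ : n → ℂ) : Matrix n n ℂ := vecMulVec ψ (star ψ)

end QDP

/-!
With `N = ∑_{k ∈ S} E†(M_k)`, the privacy inequality for `S` reads `tr (N ρ) ≤ e^ε tr (N σ)`.
Writing `ρ - σ = Δ⁺ - Δ⁻` with `Δ⁺, Δ⁻ ≥ 0` of equal trace `D(ρ, σ)` gives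
`tr (N (ρ - σ)) ≤ D(ρ, σ) (λ_max - λ_min)`, and `tr (N σ) ≥ λ_min`; with the eigenvalue bound this is
privacy. Conversely, for unit eigenvectors `u, v` of `N` for `λ_max, λ_min`, the states
`ρ = η |u⟩⟨u| + (1 - η) |v⟩⟨v|` and `σ = |v⟩⟨v|` are at trace distance `η` and turn both estimates
into equalities.
-/

namespace QDP

open scoped MatrixOrder

variable {n : Type*} [Fintype n] {N ρ σ : Matrix n n ℂ} {u v : n → ℂ}

section Channel

variable {ι : Type*} [Fintype ι] (E : ι → Matrix n n ℂ)

lemma trace_mul_applyChan (A ρ : Matrix n n ℂ) :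
    (A * applyChan E ρ).trace = (dualChan E A * ρ).trace := by
  simp only [applyChan, dualChan, Matrix.mul_sum, Matrix.sum_mul, Matrix.trace_sum]
  refine Finset.sum_congr rfl fun j _ => ?_
  rw [← Matrix.mul_assoc, ← Matrix.mul_assoc, Matrix.trace_mul_comm]
  simp only [Matrix.mul_assoc]

lemma posSemidef_dualChan {A : Matrix n n ℂ} (hA : A.PosSemidef) : (dualChan E A).PosSemidef :=
  posSemidef_sum _ fun j _ => hA.conjTranspose_mul_mul_same (E j)

end Channel

lemma isDensity_proj (hu : star u ⬝ᵥ u = 1) : IsDensity (proj u) :=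
  ⟨posSemidef_vecMulVec_self_star u, by rw [proj, trace_vecMulVec, dotProduct_comm, hu]⟩

lemma proj_mul_proj_of_orthogonal (huv : star u ⬝ᵥ v = 0) : proj u * proj v = 0 := by
  simp [proj, vecMulVec_mul_vecMulVec, huv]

lemma trace_mul_proj_of_mulVec_eq {c : ℝ} (hNu : N *ᵥ u = c • u)
    (hu : star u ⬝ᵥ u = 1) : (N * proj u).trace = c := by
  rw [proj, mul_vecMulVec, hNu, trace_vecMulVec, smul_dotProduct, dotProduct_comm, hu,
    Complex.real_smul, mul_one]

lemma isDensity_smul_proj_add_smul_proj (hu : star u ⬝ᵥ u = 1) (hv : star v ⬝ᵥ v = 1) {t : ℝ}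
    (ht0 : 0 ≤ t) (ht1 : t ≤ 1) : IsDensity (t • proj u + (1 - t) • proj v) := by
  refine ⟨((isDensity_proj hu).1.smul ht0).add ((isDensity_proj hv).1.smul (sub_nonneg.2 ht1)), ?_⟩
  rw [Matrix.trace_add, Matrix.trace_smul, Matrix.trace_smul, (isDensity_proj hu).2,
    (isDensity_proj hv).2]
  simp

variable [DecidableEq n]

lemma eigenvalues_le_lamMax (hN : N.IsHermitian) (i : n) : hN.eigenvalues i ≤ lamMax N := by
  rw [lamMax, dif_pos hN]
  exact le_ciSup (Set.finite_range _).bddAbove i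

lemma lamMin_le_eigenvalues (hN : N.IsHermitian) (i : n) : lamMin N ≤ hN.eigenvalues i := by
  rw [lamMin, dif_pos hN]
  exact ciInf_le (Set.finite_range _).bddBelow i

lemma exists_eigenvalues_eq_lamMax [Nonempty n] (hN : N.IsHermitian) :
    ∃ i, hN.eigenvalues i = lamMax N := by
  rw [lamMax, dif_pos hN]
  exact exists_eq_ciSup_of_finite

lemma exists_eigenvalues_eq_lamMin [Nonempty n] (hN : N.IsHermitian) :
    ∃ i, hN.eigenvalues i = lamMin N := by
  rw [lamMin, dif_pos hN]
  exact exists_eq_ciInf_of_finite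

lemma lamMin_le_lamMax [Nonempty n] (hN : N.IsHermitian) : lamMin N ≤ lamMax N :=
  let ⟨i, _⟩ := exists_eigenvalues_eq_lamMin hN
  (lamMin_le_eigenvalues hN i).trans (eigenvalues_le_lamMax hN i)

lemma trace_mul_eq_sum_eigenvalues_mul (hN : N.IsHermitian) (P : Matrix n n ℂ) :
    (N * P).trace = ∑ i, (hN.eigenvalues i : ℂ) *
      ((hN.eigenvectorUnitary : Matrix n n ℂ)ᴴ * P * hN.eigenvectorUnitary) i i := by
  set U : Matrix n n ℂ := (hN.eigenvectorUnitary : Matrix n n ℂ)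
  set D := diagonal (RCLike.ofReal ∘ hN.eigenvalues : n → ℂ)
  calc (N * P).trace = (U * (D * (Uᴴ * P))).trace := by
        conv_lhs => rw [hN.spectral_theorem, Unitary.conjStarAlgAut_apply, star_eq_conjTranspose]
        simp only [Matrix.mul_assoc]
        rfl
    _ = (D * (Uᴴ * P * U)).trace := by
        rw [Matrix.trace_mul_comm]
        simp only [Matrix.mul_assoc]
    _ = _ := by simp [D, Matrix.trace, Matrix.diagonal_mul]

lemma exists_re_trace_mul_eq_sum {P : Matrix n n ℂ} (hN : N.IsHermitian) (hP : P.PosSemidef) :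
    ∃ w : n → ℝ, (∀ i, 0 ≤ w i) ∧ ∑ i, w i = P.trace.re ∧
      (N * P).trace.re = ∑ i, hN.eigenvalues i * w i := by
  set U : Matrix n n ℂ := (hN.eigenvectorUnitary : Matrix n n ℂ)
  have hQ : (Uᴴ * P * U).PosSemidef := hP.conjTranspose_mul_mul_same U
  refine ⟨fun i => ((Uᴴ * P * U) i i).re, fun i => ?_, ?_, ?_⟩
  · exact (Complex.nonneg_iff.mp hQ.diag_nonneg).1
  · have hU : U * Uᴴ = 1 := Unitary.mul_star_self_of_mem hN.eigenvectorUnitary.2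
    have htr : (Uᴴ * P * U).trace = P.trace := by
      rw [Matrix.trace_mul_cycle, hU, Matrix.one_mul]
    rw [← htr, Matrix.trace, Complex.re_sum]
    rfl
  · rw [trace_mul_eq_sum_eigenvalues_mul hN, Complex.re_sum]
    exact Finset.sum_congr rfl fun i _ => Complex.re_ofReal_mul _ _

lemma re_trace_mul_le_lamMax_mul {P : Matrix n n ℂ} (hN : N.IsHermitian) (hP : P.PosSemidef) :
    (N * P).trace.re ≤ lamMax N * P.trace.re := by
  obtain ⟨w, hw, hsum, htr⟩ := exists_re_trace_mul_eq_sum hN hP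
  rw [htr, ← hsum, Finset.mul_sum]
  exact Finset.sum_le_sum fun i _ => mul_le_mul_of_nonneg_right (eigenvalues_le_lamMax hN i) (hw i)

lemma lamMin_mul_le_re_trace_mul {P : Matrix n n ℂ} (hN : N.IsHermitian) (hP : P.PosSemidef) :
    lamMin N * P.trace.re ≤ (N * P).trace.re := by
  obtain ⟨w, hw, hsum, htr⟩ := exists_re_trace_mul_eq_sum hN hP
  rw [htr, ← hsum, Finset.mul_sum]
  exact Finset.sum_le_sum fun i _ => mul_le_mul_of_nonneg_right (lamMin_le_eigenvalues hN i) (hw i)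

lemma psdSqrt_eq_sqrt {A : Matrix n n ℂ} (hA : A.PosSemidef) : psdSqrt hA = CFC.sqrt A := by
  rw [CFC.sqrt_eq_cfc, cfc_nnreal_eq_real _ A hA.nonneg, hA.1.cfc_eq, IsHermitian.cfc, psdSqrt,
    Unitary.conjStarAlgAut_apply]
  congr! 4
  ext k
  simp [Real.coe_toNNReal', max_eq_left (hA.eigenvalues_nonneg k)]

lemma traceDist_eq_re_trace_abs (ρ σ : Matrix n n ℂ) :
    traceDist ρ σ = 1 / 2 * (CFC.abs (ρ - σ)).trace.re := by
  rw [traceDist, psdSqrt_eq_sqrt]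
  rfl

lemma trace_negPart_eq_trace_posPart {A : Matrix n n ℂ} (hA : A.IsHermitian)
    (htr : A.trace = 0) : (A⁻).trace = (A⁺).trace := by
  have := congrArg Matrix.trace (CFC.posPart_sub_negPart A hA)
  rw [Matrix.trace_sub, htr, sub_eq_zero] at this
  exact this.symm

lemma traceDist_eq_re_trace_posPart (hρ : ρ.IsHermitian) (hσ : σ.IsHermitian)
    (htr : ρ.trace = σ.trace) : traceDist ρ σ = ((ρ - σ)⁺).trace.re := by
  have hΔ : (ρ - σ).IsHermitian := hρ.sub hσ
  have hneg := trace_negPart_eq_trace_posPart hΔ (by rw [Matrix.trace_sub, htr, sub_self])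
  rw [traceDist_eq_re_trace_abs, ← CFC.posPart_add_negPart (ρ - σ) hΔ, Matrix.trace_add, hneg,
    Complex.add_re]
  ring

lemma traceDist_self (ρ : Matrix n n ℂ) : traceDist ρ ρ = 0 := by
  simp [traceDist_eq_re_trace_abs]

lemma re_trace_mul_sub_le (hN : N.IsHermitian) (hρ : IsDensity ρ) (hσ : IsDensity σ) :
    (N * (ρ - σ)).trace.re ≤ traceDist ρ σ * (lamMax N - lamMin N) := by
  have hΔ : (ρ - σ).IsHermitian := hρ.1.1.sub hσ.1.1
  have htr : ρ.trace = σ.trace := hρ.2.trans hσ.2.symm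
  have htr_neg := trace_negPart_eq_trace_posPart hΔ (by rw [Matrix.trace_sub, htr, sub_self])
  have hpos : ((ρ - σ)⁺).PosSemidef := Matrix.nonneg_iff_posSemidef.mp (CFC.posPart_nonneg _)
  have hneg : ((ρ - σ)⁻).PosSemidef := Matrix.nonneg_iff_posSemidef.mp (CFC.negPart_nonneg _)
  have hupper := re_trace_mul_le_lamMax_mul hN hpos
  have hlower := lamMin_mul_le_re_trace_mul hN hneg
  rw [htr_neg] at hlower
  have hsplit : (N * (ρ - σ)).trace.re =
      (N * (ρ - σ)⁺).trace.re - (N * (ρ - σ)⁻).trace.re := by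
    conv_lhs => rw [← CFC.posPart_sub_negPart (ρ - σ) hΔ]
    rw [Matrix.mul_sub, Matrix.trace_sub, Complex.sub_re]
  rw [hsplit, traceDist_eq_re_trace_posPart hρ.1.1 hσ.1.1 htr]
  linarith

lemma traceDist_smul_proj_add_smul_proj (hu : star u ⬝ᵥ u = 1) (hv : star v ⬝ᵥ v = 1)
    (huv : star u ⬝ᵥ v = 0) {t : ℝ} (ht0 : 0 ≤ t) (ht1 : t ≤ 1) :
    traceDist (t • proj u + (1 - t) • proj v) (proj v) = t := by
  have hρ := isDensity_smul_proj_add_smul_proj hu hv ht0 ht1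
  have hsub : t • proj u + (1 - t) • proj v - proj v = t • proj u - t • proj v := by
    rw [sub_smul, one_smul]; abel
  -- the two summands of `ρ - σ` are nonnegative with product zero, so they are its `±` parts
  have hpos := (CFC.posPart_negPart_unique hsub
    (by rw [smul_mul_smul, proj_mul_proj_of_orthogonal huv, smul_zero])
    (((isDensity_proj hu).1.smul ht0).nonneg) (((isDensity_proj hv).1.smul ht0).nonneg)).1
  rw [traceDist_eq_re_trace_posPart hρ.1.1 (isDensity_proj hv).1.1
    (hρ.2.trans (isDensity_proj hv).2.symm), hpos, Matrix.trace_smul, (isDensity_proj hu).2]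
  simp

lemma star_eigenvectorBasis_dotProduct (hN : N.IsHermitian) (i j : n) :
    star ⇑(hN.eigenvectorBasis i) ⬝ᵥ ⇑(hN.eigenvectorBasis j) = if i = j then 1 else 0 := by
  rw [dotProduct_comm, ← EuclideanSpace.inner_eq_star_dotProduct]
  exact orthonormal_iff_ite.mp hN.eigenvectorBasis.orthonormal i j

lemma exists_isDensity_traceDist_le [Nonempty n] (hN : N.IsHermitian) {η : ℝ}
    (hη0 : 0 ≤ η) (hη1 : η ≤ 1) :
    ∃ ρ σ, IsDensity ρ ∧ IsDensity σ ∧ traceDist ρ σ ≤ η ∧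
      (N * ρ).trace.re = η * lamMax N + (1 - η) * lamMin N ∧ (N * σ).trace.re = lamMin N := by
  obtain ⟨i, hi⟩ := exists_eigenvalues_eq_lamMax hN
  obtain ⟨j, hj⟩ := exists_eigenvalues_eq_lamMin hN
  set b := hN.eigenvectorBasis
  have hunit (k : n) : star ⇑(b k) ⬝ᵥ ⇑(b k) = 1 := by
    simpa using star_eigenvectorBasis_dotProduct hN k k
  have htr (k : n) : (N * proj (b k)).trace = hN.eigenvalues k :=
    trace_mul_proj_of_mulVec_eq (hN.mulVec_eigenvectorBasis k) (hunit k)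
  by_cases hij : i = j
  · subst hij
    refine ⟨proj (b i), proj (b i), isDensity_proj (hunit i), isDensity_proj (hunit i),
      (traceDist_self _).trans_le hη0, ?_, ?_⟩
    · rw [htr, Complex.ofReal_re, ← hi, ← hj]
      ring
    · rw [htr, Complex.ofReal_re, hj]
  · refine ⟨_, _, isDensity_smul_proj_add_smul_proj (hunit i) (hunit j) hη0 hη1,
      isDensity_proj (hunit j), (traceDist_smul_proj_add_smul_proj (hunit i) (hunit j)
        (by simpa [hij] using star_eigenvectorBasis_dotProduct hN i j) hη0 hη1).le, ?_, ?_⟩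
    · rw [Matrix.mul_add, Matrix.mul_smul, Matrix.mul_smul, Matrix.trace_add, Matrix.trace_smul,
        Matrix.trace_smul, htr, htr, hi, hj]
      simp
    · rw [htr, Complex.ofReal_re, hj]

lemma re_trace_mul_le_of_traceDist_le [Nonempty n] (hN : N.IsHermitian)
    (hρ : IsDensity ρ) (hσ : IsDensity σ) {η c : ℝ} (hD : traceDist ρ σ ≤ η) (hc : 1 ≤ c)
    (hbound : η * lamMax N ≤ (c + η - 1) * lamMin N) :
    (N * ρ).trace.re ≤ c * (N * σ).trace.re := by
  have hσN : lamMin N ≤ (N * σ).trace.re := by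
    simpa [hσ.2] using lamMin_mul_le_re_trace_mul hN hσ.1
  have hdiff := (re_trace_mul_sub_le hN hρ hσ).trans
    (mul_le_mul_of_nonneg_right hD (sub_nonneg.2 (lamMin_le_lamMax hN)))
  have hsplit : (N * ρ).trace.re = (N * σ).trace.re + (N * (ρ - σ)).trace.re := by
    rw [Matrix.mul_sub, Matrix.trace_sub, Complex.sub_re]
    ring
  linarith [mul_le_mul_of_nonneg_left hσN (sub_nonneg.2 hc)]

end QDP

open QDP in
theorem epsDP_iff_eigenvalue_bound_general {d : ℕ} (hd : 1 ≤ d) {ι O : Type} [Fintype ι] [Fintype O]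
    (E : ι → Matrix (Fin d) (Fin d) ℂ)
    (M : O → Matrix (Fin d) (Fin d) ℂ) (hMpos : ∀ k, (M k).PosSemidef)
    (ε η : ℝ) (hε : 0 ≤ ε) (hη0 : 0 ≤ η) (hη1 : η ≤ 1) :
    IsDP E M ε 0 η ↔
      ∀ S : Finset O,
        η * lamMax (∑ k ∈ S, dualChan E (M k)) ≤
          (Real.exp ε + η - 1) * lamMin (∑ k ∈ S, dualChan E (M k)) := by
  have : Nonempty (Fin d) := ⟨⟨0, hd⟩⟩
  have hN (S : Finset O) : (∑ k ∈ S, dualChan E (M k)).IsHermitian :=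
    (posSemidef_sum S fun k _ => posSemidef_dualChan E (hMpos k)).1
  simp only [IsDP, trace_mul_applyChan, ← Matrix.trace_sum, ← Finset.sum_mul, add_zero]
  constructor
  · intro hDP S
    obtain ⟨ρ, σ, hρ, hσ, hD, hρN, hσN⟩ := exists_isDensity_traceDist_le (hN S) hη0 hη1
    have := hDP ρ σ hρ hσ hD S
    rw [hρN, hσN] at this
    linarith
  · intro hbound ρ σ hρ hσ hD S
    exact re_trace_mul_le_of_traceDist_le (hN S) hρ hσ hD (Real.one_le_exp hε) (hbound S)

open QDP in
/-- Theorem (sufficient and necessary condition for `ε`-differential privacy). -/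
theorem epsDP_iff_eigenvalue_bound {d : ℕ} (hd : 1 ≤ d) {ι O : Type} [Fintype ι] [Fintype O]
    (E : ι → Matrix (Fin d) (Fin d) ℂ) (hE : ∑ j, (E j)ᴴ * E j = 1)
    (M : O → Matrix (Fin d) (Fin d) ℂ) (hMpos : ∀ k, (M k).PosSemidef)
    (hMsum : ∑ k, M k = 1)
    (ε η : ℝ) (hε : 0 ≤ ε) (hη0 : 0 ≤ η) (hη1 : η ≤ 1) :
    IsDP E M ε 0 η ↔
      ∀ S : Finset O,
        η * lamMax (∑ k ∈ S, dualChan E (M k)) ≤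
          (Real.exp ε + η - 1) * lamMin (∑ k ∈ S, dualChan E (M k)) :=
  epsDP_iff_eigenvalue_bound_general hd E M hMpos ε η hε hη0 hη1
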